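/- Let 𝒜 be a finite alphabet and let ℱ ⊆ 𝒜⁺ be a nonempty set of forbidden factors that contains at most one factor of each length, and let i = min{|f| : f ∈ ℱ}. Suppose there exists a real β > 1 such that |𝒜| − β^{2−i}/(β−1) ≥ β and C := 1 − β^{1−i}·(1+(β−1)(i−1))/(β−1)² > 0. Then for all n ≥ 0, α(𝒜,ℱ)^n ≤ |ℒ_n(𝒜,ℱ)| ≤ C^{−1}·α(𝒜,ℱ)^n. -/

import Mathlib

open Filter

/-- The set of words of length `n` over the alphabet `A` avoiding every
forbidden factor in `F` (no element of `F` occurs as a contiguous subword). -/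
def langN {A : Type*} (F : Set (List A)) (n : ℕ) : Set (List A) :=
  {w | w.length = n ∧ ∀ f ∈ F, ¬ f <:+: w}

open Set

set_option linter.unusedSectionVars false
set_option maxHeartbeats 1000000

section Aux
variable {A : Type*} [Fintype A] {F : Set (List A)}

lemma langN_finite (F : Set (List A)) (n : ℕ) : (langN F n).Finite :=
  (List.finite_length_eq A n).subset (fun _ hw => hw.1)

lemma langN_closed {w u : List A} {n : ℕ} (hw : w ∈ langN F n) (hu : u <:+: w) :
    u ∈ langN F u.length :=
  ⟨rfl, fun f hf hfu => (hw.2 f hf (hfu.trans hu))⟩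

lemma ncard_prod {B C : Type*} (s : Set B) (t : Set C) :
    (s ×ˢ t).ncard = s.ncard * t.ncard := by
  rw [← Nat.card_coe_set_eq, ← Nat.card_coe_set_eq, ← Nat.card_coe_set_eq,
    ← Nat.card_prod]
  exact Nat.card_congr (Equiv.Set.prod s t)

lemma ncard_biUnion_le {ι B : Type*} (J : Finset ι) (f : ι → Set B) :
    (⋃ j ∈ J, f j).ncard ≤ ∑ j ∈ J, (f j).ncard := by
  classical
  induction J using Finset.induction with
  | empty => simp
  | @insert a s hj ih =>
    rw [Finset.sum_insert hj, Finset.set_biUnion_insert]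
    exact le_trans (Set.ncard_union_le _ _) (by omega)

/-- counting bound for one-letter extensions -/
lemma ext_count (hF : ∀ f ∈ F, f ≠ ([] : List A))
    (honeper : ∀ f ∈ F, ∀ g ∈ F, f.length = g.length → f = g)
    {i : ℕ} (hi : IsLeast {n : ℕ | ∃ f ∈ F, f.length = n} i)
    (n : ℕ) :
    Fintype.card A * (langN F n).ncard ≤
      (langN F (n+1)).ncard + ∑ ℓ ∈ Finset.Icc i (n+1), (langN F (n+1-ℓ)).ncard := by
  classical
  set E : Set (List A) := {v | v.length = n+1 ∧ v.dropLast ∈ langN F n} with hE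
  set S : ℕ → Set (List A) := fun ℓ =>
    {v | v.length = n+1 ∧ v.dropLast ∈ langN F n ∧ ∃ f ∈ F, f.length = ℓ ∧ f <:+ v} with hS
  -- E has cardinality card A * L n
  have hEcard : E.ncard = Fintype.card A * (langN F n).ncard := by
    have himg : E = (fun p : List A × A => p.1 ++ [p.2]) '' ((langN F n) ×ˢ Set.univ) := by
      ext v
      constructor
      · rintro ⟨hlen, hdl⟩
        have hne : v ≠ [] := by intro h; simp [h] at hlen
        exact ⟨(v.dropLast, v.getLast hne), ⟨hdl, trivial⟩, List.dropLast_append_getLast hne⟩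
      · rintro ⟨⟨w, c⟩, ⟨hw, -⟩, rfl⟩
        refine ⟨by simp [hw.1], ?_⟩
        rw [List.dropLast_concat]; exact hw
    have hinj : Set.InjOn (fun p : List A × A => p.1 ++ [p.2]) ((langN F n) ×ˢ Set.univ) := by
      rintro ⟨w, c⟩ _ ⟨w', c'⟩ _ h
      simp only at h
      have h1 : w = w' := by
        have := congrArg List.dropLast h
        simpa [List.dropLast_concat] using this
      subst h1
      have := List.append_cancel_left h
      simp only [List.cons.injEq] at this
      simp [this.1]
    rw [himg, Set.ncard_image_of_injOn hinj, _root_.ncard_prod, Set.ncard_univ,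
      Nat.card_eq_fintype_card, mul_comm]
  -- decomposition
  have hsub : E ⊆ langN F (n+1) ∪ ⋃ ℓ ∈ Finset.Icc i (n+1), S ℓ := by
    rintro v ⟨hlen, hdl⟩
    by_cases hv : v ∈ langN F (n+1)
    · exact Or.inl hv
    · right
      have : ∃ f ∈ F, f <:+: v := by
        by_contra h; push_neg at h; exact hv ⟨hlen, h⟩
      obtain ⟨f, hf, hfv⟩ := this
      -- f is a suffix of v
      obtain ⟨s, t, hst⟩ := hfv
      have ht : t = [] := by
        by_contra ht
        have : f <:+: v.dropLast := by
          rw [← hst, List.append_assoc, List.dropLast_append_of_ne_nil (l := f ++ t) (by simp [ht]),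
            List.dropLast_append_of_ne_nil ht, ← List.append_assoc]
          exact ⟨s, t.dropLast, rfl⟩
        exact hdl.2 f hf this
      subst ht
      have hsuf : f <:+ v := ⟨s, by simpa using hst⟩
      have hfl1 : i ≤ f.length := hi.2 ⟨f, hf, rfl⟩
      have hfl2 : f.length ≤ n+1 := by rw [← hlen]; exact hsuf.length_le
      refine Set.mem_biUnion (Finset.mem_Icc.mpr ⟨hfl1, hfl2⟩) ?_
      exact ⟨hlen, hdl, f, hf, rfl, hsuf⟩
  -- card of S ℓ
  have hScard : ∀ ℓ, (S ℓ).ncard ≤ (langN F (n+1-ℓ)).ncard := by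
    intro ℓ
    refine Set.ncard_le_ncard_of_injOn (fun v => v.take (n+1-ℓ)) ?_ ?_ (langN_finite F _)
    · rintro v ⟨hlen, hdl, f, hf, hfl, hsuf⟩
      have hℓ1 : 1 ≤ ℓ := by
        rw [← hfl]; exact List.length_pos_iff.mpr (hF f hf)
      have hpre : v.take (n+1-ℓ) <+: v.dropLast := by
        rw [List.dropLast_eq_take, hlen]
        simp only [Nat.add_sub_cancel]
        rw [show n+1-ℓ = min (n+1-ℓ) n by omega, ← List.take_take]
        exact List.take_prefix _ _
      have := langN_closed hdl hpre.isInfix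
      have hlt : (v.take (n+1-ℓ)).length = n+1-ℓ := by
        rw [List.length_take, hlen]; omega
      rwa [hlt] at this
    · rintro v ⟨hlen, hdl, f, hf, hfl, hsuf⟩ v' ⟨hlen', hdl', f', hf', hfl', hsuf'⟩ h
      have hff : f = f' := honeper f hf f' hf' (by rw [hfl, hfl'])
      subst hff
      obtain ⟨p, hp⟩ := hsuf
      obtain ⟨p', hp'⟩ := hsuf'
      have hpl : p.length = n+1-ℓ := by
        have := congrArg List.length hp
        simp only [List.length_append] at this
        omega
      have hpl' : p'.length = n+1-ℓ := by
        have := congrArg List.length hp'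
        simp only [List.length_append] at this
        omega
      have e1 : v.take (n+1-ℓ) = p := by
        rw [← hp, ← hpl, List.take_left]
      have e2 : v'.take (n+1-ℓ) = p' := by
        rw [← hp', ← hpl', List.take_left]
      rw [← hp, ← hp', e1.symm.trans (h.trans e2)]
  calc Fintype.card A * (langN F n).ncard = E.ncard := hEcard.symm
    _ ≤ (langN F (n+1) ∪ ⋃ ℓ ∈ Finset.Icc i (n+1), S ℓ).ncard := by
        refine Set.ncard_le_ncard hsub ?_
        refine Set.Finite.union (langN_finite F _) ?_
        exact Set.Finite.biUnion (Finset.finite_toSet _) (fun ℓ _ =>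
          ((List.finite_length_eq A (n+1)).subset (fun v hv => hv.1)))
    _ ≤ (langN F (n+1)).ncard + (⋃ ℓ ∈ Finset.Icc i (n+1), S ℓ).ncard :=
        Set.ncard_union_le _ _
    _ ≤ _ := by
        gcongr
        exact le_trans (ncard_biUnion_le _ _) (Finset.sum_le_sum fun ℓ _ => hScard ℓ)

end Aux
section S
variable {A : Type*}
lemma master {u v s f t : List A} (h : u ++ v = s ++ f ++ t) :
    u = s.take u.length ++ (f.take (u.length - s.length) ++
        t.take (u.length - s.length - f.length)) ∧
    v = s.drop u.length ++ (f.drop (u.length - s.length) ++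
        t.drop (u.length - s.length - f.length)) := by
  constructor
  · have := congrArg (List.take u.length) h
    rw [List.take_left, List.append_assoc, List.take_append,
      List.take_append] at this
    exact this
  · have := congrArg (List.drop u.length) h
    rw [List.drop_left, List.append_assoc, List.drop_append,
      List.drop_append] at this
    exact this
end S

section Aux2
variable {A : Type*} [Fintype A] {F : Set (List A)}

lemma glue_count
    (honeper : ∀ f ∈ F, ∀ g ∈ F, f.length = g.length → f = g)
    {i : ℕ} (hi : IsLeast {n : ℕ | ∃ f ∈ F, f.length = n} i)
    (m n : ℕ) :
    (langN F m).ncard * (langN F n).ncard ≤ (langN F (m+n)).ncard +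
      ∑ ℓ ∈ Finset.Icc i (m+n), ∑ a ∈ Finset.Icc 1 (ℓ-1),
        (if a ≤ m ∧ ℓ - a ≤ n then
          (langN F (m-a)).ncard * (langN F (n-(ℓ-a))).ncard else 0) := by
  classical
  set bad : ℕ → ℕ → Set (List A × List A) := fun ℓ a =>
    {p | p.1 ∈ langN F m ∧ p.2 ∈ langN F n ∧ 1 ≤ a ∧ a + 1 ≤ ℓ ∧ a ≤ m ∧ ℓ - a ≤ n ∧
      ∃ f ∈ F, f.length = ℓ ∧ ∃ s t, p.1 ++ p.2 = s ++ f ++ t ∧ s.length = m - a} with hbad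
  set good : Set (List A × List A) :=
    {p | p.1 ∈ langN F m ∧ p.2 ∈ langN F n ∧ (p.1 ++ p.2) ∈ langN F (m+n)} with hgood
  have hcover : (langN F m) ×ˢ (langN F n) ⊆
      good ∪ ⋃ ℓ ∈ Finset.Icc i (m+n), ⋃ a ∈ Finset.Icc 1 (ℓ-1), bad ℓ a := by
    rintro ⟨u, v⟩ ⟨hu, hv⟩
    by_cases hgd : u ++ v ∈ langN F (m+n)
    · exact Or.inl ⟨hu, hv, hgd⟩
    right
    have hlenuv : (u ++ v).length = m + n := by simp [hu.1, hv.1]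
    have : ∃ f ∈ F, f <:+: u ++ v := by
      by_contra h; push_neg at h; exact hgd ⟨hlenuv, h⟩
    obtain ⟨f, hf, s, t, hst⟩ := this
    have hm := master hst.symm
    have hul : u.length = m := hu.1
    have hvl : v.length = n := hv.1
    have hlens : s.length + f.length + t.length = m + n := by
      have := congrArg List.length hst
      simp only [List.length_append] at this
      omega
    have hslen : s.length < m := by
      by_contra hle
      push_neg at hle
      have h2 := hm.2
      rw [show u.length - s.length - f.length = 0 by omega,
        show u.length - s.length = 0 by omega] at h2
      simp only [List.drop_zero] at h2
      exact hv.2 f hf ⟨s.drop u.length, t, by rw [List.append_assoc]; exact h2.symm⟩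
    have hmlt : m < s.length + f.length := by
      by_contra hle
      push_neg at hle
      have h1 := hm.1
      rw [List.take_of_length_le (l := s) (by omega),
        List.take_of_length_le (l := f) (by omega)] at h1
      exact hu.2 f hf ⟨s, t.take (u.length - s.length - f.length),
        by rw [List.append_assoc]; exact h1.symm⟩
    have hL1 : f.length ∈ Finset.Icc i (m+n) :=
      Finset.mem_Icc.mpr ⟨hi.2 ⟨f, hf, rfl⟩, by omega⟩
    have hL2 : m - s.length ∈ Finset.Icc 1 (f.length - 1) :=
      Finset.mem_Icc.mpr ⟨by omega, by omega⟩
    have hmem : ((u, v) : List A × List A) ∈ bad f.length (m - s.length) :=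
      ⟨hu, hv, by omega, by omega, by omega, by omega, f, hf, rfl, s, t, hst.symm, by omega⟩
    exact Set.mem_biUnion hL1 (Set.mem_biUnion hL2 hmem)
  have hgoodcard : good.ncard ≤ (langN F (m+n)).ncard := by
    refine Set.ncard_le_ncard_of_injOn (fun p => p.1 ++ p.2)
      (fun p hp => hp.2.2) ?_ (langN_finite F _)
    rintro ⟨u, v⟩ ⟨hu, -, -⟩ ⟨u', v'⟩ ⟨hu', -, -⟩ h
    simp only at h
    have e1 : u = u' := by
      have := congrArg (List.take m) h
      rwa [List.take_left' hu.1, List.take_left' hu'.1] at this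
    subst e1
    have := List.append_cancel_left h
    simp [this]
  have hbadsub : ∀ ℓ a, bad ℓ a ⊆ (langN F m) ×ˢ (langN F n) :=
    fun ℓ a p hp => ⟨hp.1, hp.2.1⟩
  have hbadcard : ∀ ℓ a, (bad ℓ a).ncard ≤
      if a ≤ m ∧ ℓ - a ≤ n then
        (langN F (m-a)).ncard * (langN F (n-(ℓ-a))).ncard else 0 := by
    intro ℓ a
    split_ifs with hcnd
    · rw [← _root_.ncard_prod]
      refine Set.ncard_le_ncard_of_injOn
        (fun p => (p.1.take (m-a), p.2.drop (ℓ-a))) ?_ ?_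
        ((langN_finite F _).prod (langN_finite F _))
      · rintro ⟨u, v⟩ ⟨hu, hv, -⟩
        constructor
        · have := langN_closed hu (List.take_prefix (m-a) u).isInfix
          rwa [List.length_take, hu.1, min_eq_left (by omega)] at this
        · have := langN_closed hv (List.drop_suffix (ℓ-a) v).isInfix
          rwa [List.length_drop, hv.1] at this
      · rintro ⟨u, v⟩ ⟨hu, hv, ha1, haℓ, ham, hℓa, f, hf, hfl, s, t, hst, hsl⟩
          ⟨u', v'⟩ ⟨hu', hv', -, -, -, -, f', hf', hfl', s', t', hst', hsl'⟩ h
        simp only [Prod.mk.injEq] at h ⊢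
        have hff : f = f' := honeper f hf f' hf' (by rw [hfl, hfl'])
        subst hff
        -- decompose both pairs
        have key : ∀ u₀ v₀ s₀ t₀ : List A, u₀ ∈ langN F m → v₀ ∈ langN F n →
            u₀ ++ v₀ = s₀ ++ f ++ t₀ → s₀.length = m - a →
            u₀ = s₀ ++ f.take a ∧ v₀ = f.drop a ++ t₀ := by
          intro u₀ v₀ s₀ t₀ hu₀ hv₀ hst₀ hsl₀
          have hm₀ := master hst₀
          have hu₀l : u₀.length = m := hu₀.1
          rw [show u₀.length - s₀.length - f.length = 0 by omega,
            show u₀.length - s₀.length = a by omega,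
            List.take_of_length_le (l := s₀) (by omega)] at hm₀
          have h1 := hm₀.1
          have h2 := hm₀.2
          rw [List.take_zero, List.append_nil] at h1
          rw [List.drop_zero, List.drop_of_length_le (l := s₀) (by omega),
            List.nil_append] at h2
          exact ⟨h1, h2⟩
        obtain ⟨e1, e2⟩ := key u v s t hu hv hst hsl
        obtain ⟨e1', e2'⟩ := key u' v' s' t' hu' hv' hst' hsl'
        have hs : u.take (m-a) = s := by rw [e1, List.take_left' hsl]
        have hs' : u'.take (m-a) = s' := by rw [e1', List.take_left' hsl']
        have ht : v.drop (ℓ-a) = t := by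
          rw [e2, List.drop_left' (by rw [List.length_drop, hfl])]
        have ht' : v'.drop (ℓ-a) = t' := by
          rw [e2', List.drop_left' (by rw [List.length_drop, hfl'])]
        have hss : s = s' := by rw [← hs, ← hs', h.1]
        have htt : t = t' := by rw [← ht, ← ht', h.2]
        rw [e1, e1', e2, e2', hss, htt]
        exact ⟨rfl, rfl⟩
    · have : bad ℓ a = ∅ := by
        ext p
        simp only [Set.mem_empty_iff_false, iff_false]
        rintro ⟨-, -, -, -, ham, hℓa, -⟩
        exact hcnd ⟨ham, hℓa⟩
      simp [this]
  calc (langN F m).ncard * (langN F n).ncard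
      = ((langN F m) ×ˢ (langN F n)).ncard := (_root_.ncard_prod _ _).symm
    _ ≤ (good ∪ ⋃ ℓ ∈ Finset.Icc i (m+n), ⋃ a ∈ Finset.Icc 1 (ℓ-1), bad ℓ a).ncard := by
        refine Set.ncard_le_ncard hcover ?_
        refine Set.Finite.union ?_ ?_
        · exact ((langN_finite F m).prod (langN_finite F n)).subset
            (fun p hp => ⟨hp.1, hp.2.1⟩)
        · refine Set.Finite.biUnion (Finset.finite_toSet _) (fun ℓ _ => ?_)
          refine Set.Finite.biUnion (Finset.finite_toSet _) (fun a _ => ?_)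
          exact ((langN_finite F m).prod (langN_finite F n)).subset (hbadsub ℓ a)
    _ ≤ good.ncard + (⋃ ℓ ∈ Finset.Icc i (m+n), ⋃ a ∈ Finset.Icc 1 (ℓ-1), bad ℓ a).ncard :=
        Set.ncard_union_le _ _
    _ ≤ _ := by
        refine add_le_add hgoodcard ?_
        refine le_trans (ncard_biUnion_le _ _) (Finset.sum_le_sum fun ℓ _ => ?_)
        exact le_trans (ncard_biUnion_le _ _) (Finset.sum_le_sum fun a _ => hbadcard ℓ a)
end Aux2

noncomputable def Sag (x : ℝ) (j : ℕ) : ℝ := (x^(j+1) + (1-x)*((j:ℝ)-1)*x^j)/(1-x)^2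

lemma Sag_succ {x : ℝ} (hx1 : x ≠ 1) (j : ℕ) :
    Sag x j - Sag x (j+1) = ((j:ℝ)-1)*x^j := by
  unfold Sag
  have h : (1:ℝ) - x ≠ 0 := sub_ne_zero.mpr (Ne.symm hx1)
  field_simp
  push_cast
  ring

lemma Sag_nonneg {x : ℝ} (hx0 : 0 ≤ x) (hx1 : x ≤ 1) {j : ℕ} (hj : 1 ≤ j) :
    0 ≤ Sag x j := by
  unfold Sag
  have h1 : (0:ℝ) ≤ (j:ℝ) - 1 := by
    have : (1:ℝ) ≤ (j:ℝ) := by exact_mod_cast hj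
    linarith
  apply div_nonneg ?_ (sq_nonneg _)
  exact add_nonneg (pow_nonneg hx0 _)
    (mul_nonneg (mul_nonneg (by linarith) h1) (pow_nonneg hx0 _))

lemma geom_sum_eq' {x : ℝ} (hx1 : x ≠ 1) (i : ℕ) :
    ∀ N, ∑ ℓ ∈ Finset.Icc i N, x^ℓ = (x^(min i (N+1)) - x^(N+1))/(1-x) := by
  have h : (1:ℝ) - x ≠ 0 := sub_ne_zero.mpr (Ne.symm hx1)
  intro N
  induction N with
  | zero =>
    rcases Nat.eq_zero_or_pos i with hi | hi
    · subst hi; simp; field_simp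
    · rw [Finset.Icc_eq_empty (by omega), show min i 1 = 1 by omega]
      simp
  | succ N ih =>
    by_cases hiN : i ≤ N + 1
    · rw [Finset.sum_Icc_succ_top hiN, ih, show min i (N+1) = i by omega,
        show min i (N+2) = i by omega]
      field_simp
      ring
    · rw [Finset.Icc_eq_empty (by omega), show min i (N+2) = N+2 by omega]
      simp

lemma geom_sum_le' {x : ℝ} (hx0 : 0 ≤ x) (hx1 : x < 1) (i N : ℕ) :
    ∑ ℓ ∈ Finset.Icc i N, x^ℓ ≤ x^i / (1-x) := by
  by_cases hiN : i ≤ N + 1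
  · rw [geom_sum_eq' (ne_of_lt hx1) i N, show min i (N+1) = i by omega]
    exact (div_le_div_iff_of_pos_right (by linarith)).mpr
      (by nlinarith [pow_nonneg hx0 (N+1)])
  · rw [Finset.Icc_eq_empty (by omega)]
    simp only [Finset.sum_empty]
    exact div_nonneg (pow_nonneg hx0 i) (by linarith)

lemma ag_sum_eq {x : ℝ} (hx1 : x ≠ 1) {i : ℕ} (hi : 1 ≤ i) :
    ∀ N, i ≤ N + 1 → ∑ ℓ ∈ Finset.Icc i N, ((ℓ:ℝ)-1)*x^ℓ = Sag x i - Sag x (N+1) := by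
  intro N
  induction N with
  | zero =>
    intro hiN
    have : i = 1 := by omega
    subst this
    simp
  | succ N ih =>
    intro hiN
    by_cases hiN' : i ≤ N + 1
    · rw [Finset.sum_Icc_succ_top (by omega), ih hiN', ← Sag_succ hx1 (N+1)]
      ring
    · have : i = N + 2 := by omega
      subst this
      rw [Finset.Icc_eq_empty (by omega)]
      simp

lemma ag_sum_le {x : ℝ} (hx0 : 0 ≤ x) (hx1 : x < 1) {i : ℕ} (hi : 1 ≤ i) (N : ℕ) :
    ∑ ℓ ∈ Finset.Icc i N, ((ℓ:ℝ)-1)*x^ℓ ≤ Sag x i := by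
  by_cases hiN : i ≤ N + 1
  · rw [ag_sum_eq (ne_of_lt hx1) hi N hiN]
    have := Sag_nonneg hx0 (le_of_lt hx1) (j := N+1) (by omega)
    linarith
  · rw [Finset.Icc_eq_empty (by omega)]
    simpa using Sag_nonneg hx0 (le_of_lt hx1) hi

section Growth
variable {A : Type*} [Fintype A] {F : Set (List A)} {i : ℕ} {β : ℝ}

lemma i_pos (hF : ∀ f ∈ F, f ≠ ([] : List A))
    (hi : IsLeast {n : ℕ | ∃ f ∈ F, f.length = n} i) : 1 ≤ i := by
  obtain ⟨f, hf, hfl⟩ := hi.1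
  rw [← hfl]
  exact List.length_pos_iff.mpr (hF f hf)

lemma beta_step (hF : ∀ f ∈ F, f ≠ ([] : List A))
    (honeper : ∀ f ∈ F, ∀ g ∈ F, f.length = g.length → f = g)
    (hi : IsLeast {n : ℕ | ∃ f ∈ F, f.length = n} i) (hβ : 1 < β)
    (hcond : β ≤ (Fintype.card A : ℝ) - β ^ ((2 : ℤ) - (i : ℤ)) / (β - 1)) :
    ∀ n : ℕ, β * ((langN F n).ncard : ℝ) ≤ ((langN F (n+1)).ncard : ℝ) := by
  have hβ0 : (0:ℝ) < β := lt_trans one_pos hβ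
  have hi1 : 1 ≤ i := i_pos hF hi
  intro n
  induction n using Nat.strong_induction_on with
  | _ n IH =>
  have chain : ∀ k j : ℕ, k + j ≤ n →
      β^j * ((langN F k).ncard : ℝ) ≤ ((langN F (k+j)).ncard : ℝ) := by
    intro k j
    induction j with
    | zero => intro _; simp
    | succ j ihj =>
      intro hkj
      have h1 := ihj (by omega)
      have h2 := IH (k+j) (by omega)
      have hb : (0:ℝ) ≤ β := hβ0.le
      calc β^(j+1) * ((langN F k).ncard : ℝ) = β * (β^j * ((langN F k).ncard : ℝ)) := by
            ring
        _ ≤ β * ((langN F (k+j)).ncard : ℝ) := mul_le_mul_of_nonneg_left h1 hb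
        _ ≤ _ := h2
  have hnat := ext_count hF honeper hi n
  have hreal : (Fintype.card A : ℝ) * ((langN F n).ncard : ℝ) ≤
      ((langN F (n+1)).ncard : ℝ) +
        ∑ ℓ ∈ Finset.Icc i (n+1), ((langN F (n+1-ℓ)).ncard : ℝ) := by
    exact_mod_cast hnat
  have hterm : ∀ ℓ ∈ Finset.Icc i (n+1),
      ((langN F (n+1-ℓ)).ncard : ℝ) ≤ β * ((langN F n).ncard : ℝ) * (β⁻¹)^ℓ := by
    intro ℓ hℓ
    rw [Finset.mem_Icc] at hℓ
    obtain ⟨j, rfl⟩ : ∃ j, ℓ = j + 1 := ⟨ℓ - 1, by omega⟩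
    have hc := chain (n+1-(j+1)) j (by omega)
    rw [show n+1-(j+1)+j = n by omega] at hc
    have heq : β * ((langN F n).ncard : ℝ) * (β⁻¹)^(j+1)
        = ((langN F n).ncard : ℝ) / β^j := by
      rw [pow_succ, inv_pow]
      field_simp
    rw [heq, le_div_iff₀ (pow_pos hβ0 j)]
    linarith [hc]
  have hx0 : (0:ℝ) ≤ β⁻¹ := inv_nonneg.mpr hβ0.le
  have hx1 : β⁻¹ < 1 := inv_lt_one_of_one_lt₀ hβ
  have hLn : (0:ℝ) ≤ ((langN F n).ncard : ℝ) := Nat.cast_nonneg _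
  have hsum : ∑ ℓ ∈ Finset.Icc i (n+1), ((langN F (n+1-ℓ)).ncard : ℝ) ≤
      β * ((langN F n).ncard : ℝ) * ((β⁻¹)^i / (1-β⁻¹)) := by
    calc ∑ ℓ ∈ Finset.Icc i (n+1), ((langN F (n+1-ℓ)).ncard : ℝ)
        ≤ ∑ ℓ ∈ Finset.Icc i (n+1), β * ((langN F n).ncard : ℝ) * (β⁻¹)^ℓ :=
          Finset.sum_le_sum hterm
      _ = β * ((langN F n).ncard : ℝ) * ∑ ℓ ∈ Finset.Icc i (n+1), (β⁻¹)^ℓ := by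
          rw [Finset.mul_sum]
      _ ≤ _ := by
          apply mul_le_mul_of_nonneg_left (geom_sum_le' hx0 hx1 i (n+1))
          positivity
  have hid : β * ((β⁻¹)^i / (1-β⁻¹)) = β ^ ((2:ℤ) - (i:ℤ)) / (β - 1) := by
    have hz : β ^ ((2:ℤ) - (i:ℤ)) = β^2 / β^i := by
      rw [zpow_sub₀ hβ0.ne', show ((2:ℤ)) = ((2:ℕ):ℤ) by norm_num,
        zpow_natCast, zpow_natCast]
    rw [hz, inv_pow]
    have h1 : β - 1 ≠ 0 := by linarith
    have h2 : (β:ℝ)^i ≠ 0 := pow_ne_zero i hβ0.ne'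
    field_simp
  have hfin : β * ((langN F n).ncard : ℝ) ≤
      ((Fintype.card A : ℝ) - β ^ ((2:ℤ) - (i:ℤ)) / (β - 1)) * ((langN F n).ncard : ℝ) :=
    mul_le_mul_of_nonneg_right hcond hLn
  have hrw : β * ((langN F n).ncard : ℝ) * ((β⁻¹)^i / (1-β⁻¹))
      = (β ^ ((2:ℤ) - (i:ℤ)) / (β - 1)) * ((langN F n).ncard : ℝ) := by
    rw [← hid]; ring
  rw [hrw] at hsum
  nlinarith [hsum, hreal, hfin]

lemma beta_chain (hF : ∀ f ∈ F, f ≠ ([] : List A))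
    (honeper : ∀ f ∈ F, ∀ g ∈ F, f.length = g.length → f = g)
    (hi : IsLeast {n : ℕ | ∃ f ∈ F, f.length = n} i) (hβ : 1 < β)
    (hcond : β ≤ (Fintype.card A : ℝ) - β ^ ((2 : ℤ) - (i : ℤ)) / (β - 1)) :
    ∀ k j : ℕ, β^j * ((langN F k).ncard : ℝ) ≤ ((langN F (k+j)).ncard : ℝ) := by
  have hβ0 : (0:ℝ) < β := lt_trans one_pos hβ
  intro k j
  induction j with
  | zero => simp
  | succ j ihj =>
    calc β^(j+1) * ((langN F k).ncard : ℝ) = β * (β^j * ((langN F k).ncard : ℝ)) := by ring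
      _ ≤ β * ((langN F (k+j)).ncard : ℝ) := mul_le_mul_of_nonneg_left ihj hβ0.le
      _ ≤ _ := beta_step hF honeper hi hβ hcond (k+j)

lemma langN_zero (hF : ∀ f ∈ F, f ≠ ([] : List A)) : (langN F 0).ncard = 1 := by
  have : langN F 0 = {([] : List A)} := by
    ext w
    constructor
    · rintro ⟨hw, -⟩
      exact List.length_eq_zero_iff.mp hw
    · rintro rfl
      refine ⟨rfl, fun f hf hinf => ?_⟩
      obtain ⟨s, t, hst⟩ := hinf
      have := congrArg List.length hst
      simp only [List.length_append, List.length_nil] at this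
      exact hF f hf (List.length_eq_zero_iff.mp (by omega))
  rw [this, Set.ncard_singleton]

lemma one_le_L (hF : ∀ f ∈ F, f ≠ ([] : List A))
    (honeper : ∀ f ∈ F, ∀ g ∈ F, f.length = g.length → f = g)
    (hi : IsLeast {n : ℕ | ∃ f ∈ F, f.length = n} i) (hβ : 1 < β)
    (hcond : β ≤ (Fintype.card A : ℝ) - β ^ ((2 : ℤ) - (i : ℤ)) / (β - 1)) :
    ∀ n : ℕ, 1 ≤ ((langN F n).ncard : ℝ) := by
  intro n
  have := beta_chain hF honeper hi hβ hcond 0 n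
  rw [langN_zero hF] at this
  simp only [Nat.cast_one, mul_one, Nat.zero_add] at this
  have h1 : (1:ℝ) ≤ β^n := one_le_pow₀ hβ.le
  linarith

lemma submult (F : Set (List A)) (m n : ℕ) :
    (langN F (m+n)).ncard ≤ (langN F m).ncard * (langN F n).ncard := by
  rw [← _root_.ncard_prod]
  refine Set.ncard_le_ncard_of_injOn (fun w => (w.take m, w.drop m)) ?_ ?_
    ((langN_finite F m).prod (langN_finite F n))
  · intro w hw
    constructor
    · have := langN_closed hw (List.take_prefix m w).isInfix
      rwa [List.length_take, hw.1, min_eq_left (by omega)] at this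
    · have := langN_closed hw (List.drop_suffix m w).isInfix
      rwa [List.length_drop, hw.1, show m+n-m = n by omega] at this
  · intro w hw w' hw' h
    simp only [Prod.mk.injEq] at h
    rw [← List.take_append_drop m w, ← List.take_append_drop m w', h.1, h.2]

end Growth

section Glue
variable {A : Type*} [Fintype A] {F : Set (List A)} {i : ℕ} {β : ℝ}

lemma glue_real (hF : ∀ f ∈ F, f ≠ ([] : List A))
    (honeper : ∀ f ∈ F, ∀ g ∈ F, f.length = g.length → f = g)
    (hi : IsLeast {n : ℕ | ∃ f ∈ F, f.length = n} i) (hβ : 1 < β)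
    (hcond : β ≤ (Fintype.card A : ℝ) - β ^ ((2 : ℤ) - (i : ℤ)) / (β - 1))
    (C : ℝ)
    (hC : C = 1 - β ^ ((1 : ℤ) - (i : ℤ)) * (1 + (β - 1) * ((i : ℝ) - 1)) / (β - 1) ^ 2)
    (m n : ℕ) :
    C * (((langN F m).ncard : ℝ) * ((langN F n).ncard : ℝ)) ≤
      ((langN F (m+n)).ncard : ℝ) := by
  classical
  have hβ0 : (0:ℝ) < β := lt_trans one_pos hβ
  have hi1 : 1 ≤ i := i_pos hF hi
  have hx0 : (0:ℝ) ≤ β⁻¹ := inv_nonneg.mpr hβ0.le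
  have hx1 : β⁻¹ < 1 := inv_lt_one_of_one_lt₀ hβ
  set Lm : ℝ := ((langN F m).ncard : ℝ) with hLm
  set Ln : ℝ := ((langN F n).ncard : ℝ) with hLn
  have hLm0 : 0 ≤ Lm := Nat.cast_nonneg _
  have hLn0 : 0 ≤ Ln := Nat.cast_nonneg _
  have hnat := glue_count honeper hi m n
  have hreal : Lm * Ln ≤ ((langN F (m+n)).ncard : ℝ) +
      ∑ ℓ ∈ Finset.Icc i (m+n), ∑ a ∈ Finset.Icc 1 (ℓ-1),
        (if a ≤ m ∧ ℓ - a ≤ n then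
          ((langN F (m-a)).ncard : ℝ) * ((langN F (n-(ℓ-a))).ncard : ℝ) else 0) := by
    rw [hLm, hLn]
    exact_mod_cast hnat
  have chain := beta_chain hF honeper hi hβ hcond
  have hterm : ∀ ℓ ∈ Finset.Icc i (m+n), ∀ a ∈ Finset.Icc 1 (ℓ-1),
      (if a ≤ m ∧ ℓ - a ≤ n then
          ((langN F (m-a)).ncard : ℝ) * ((langN F (n-(ℓ-a))).ncard : ℝ) else 0)
        ≤ Lm * Ln * (β⁻¹)^ℓ := by
    intro ℓ hℓ a ha
    rw [Finset.mem_Icc] at hℓ ha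
    split_ifs with hcnd
    · have c1 := chain (m-a) a
      rw [show m-a+a = m by omega] at c1
      have c2 := chain (n-(ℓ-a)) (ℓ-a)
      rw [show n-(ℓ-a)+(ℓ-a) = n by omega] at c2
      have hmul : (β^a * ((langN F (m-a)).ncard : ℝ)) *
          (β^(ℓ-a) * ((langN F (n-(ℓ-a))).ncard : ℝ)) ≤ Lm * Ln :=
        mul_le_mul c1 c2 (by positivity) hLm0
      have hba : β^a * β^(ℓ-a) = β^ℓ := by
        rw [← pow_add, show a+(ℓ-a) = ℓ by omega]
      have hβl : (0:ℝ) < β^ℓ := pow_pos hβ0 _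
      set X : ℝ := ((langN F (m-a)).ncard : ℝ) with hX
      set Y : ℝ := ((langN F (n-(ℓ-a))).ncard : ℝ) with hY
      have hmul' : β^ℓ * (X * Y) ≤ Lm * Ln := by
        calc β^ℓ * (X * Y) = (β^a * X) * (β^(ℓ-a) * Y) := by rw [← hba]; ring
          _ ≤ Lm * Ln := hmul
      rw [show Lm * Ln * (β⁻¹)^ℓ = (Lm * Ln)/β^ℓ by rw [inv_pow]; ring,
        le_div_iff₀ hβl]
      calc X * Y * β^ℓ = β^ℓ * (X * Y) := by ring
        _ ≤ Lm * Ln := hmul'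
    · positivity
  have hsum1 : ∀ ℓ ∈ Finset.Icc i (m+n),
      ∑ a ∈ Finset.Icc 1 (ℓ-1),
        (if a ≤ m ∧ ℓ - a ≤ n then
          ((langN F (m-a)).ncard : ℝ) * ((langN F (n-(ℓ-a))).ncard : ℝ) else 0)
        ≤ ((ℓ:ℝ)-1) * (β⁻¹)^ℓ * (Lm * Ln) := by
    intro ℓ hℓ
    have h1 : 1 ≤ ℓ := le_trans hi1 (Finset.mem_Icc.mp hℓ).1
    calc ∑ a ∈ Finset.Icc 1 (ℓ-1), _
        ≤ (Finset.Icc 1 (ℓ-1)).card • (Lm * Ln * (β⁻¹)^ℓ) :=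
          Finset.sum_le_card_nsmul _ _ _ (hterm ℓ hℓ)
      _ = ((ℓ-1 : ℕ):ℝ) * (Lm * Ln * (β⁻¹)^ℓ) := by
          rw [Nat.card_Icc, nsmul_eq_mul]
          norm_num
      _ = ((ℓ:ℝ)-1) * (β⁻¹)^ℓ * (Lm * Ln) := by
          rw [Nat.cast_sub h1]
          push_cast
          ring
  have hsum : ∑ ℓ ∈ Finset.Icc i (m+n), ∑ a ∈ Finset.Icc 1 (ℓ-1),
        (if a ≤ m ∧ ℓ - a ≤ n then
          ((langN F (m-a)).ncard : ℝ) * ((langN F (n-(ℓ-a))).ncard : ℝ) else 0)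
      ≤ (1 - C) * (Lm * Ln) := by
    have hSag : Sag β⁻¹ i = 1 - C := by
      rw [hC]
      unfold Sag
      have hz : β ^ ((1:ℤ) - (i:ℤ)) = β / β^i := by
        rw [zpow_sub₀ hβ0.ne', zpow_one, zpow_natCast]
      have h1 : β - 1 ≠ 0 := by linarith
      have h2 : (β:ℝ)^i ≠ 0 := pow_ne_zero i hβ0.ne'
      rw [hz, inv_pow, pow_succ, inv_pow]
      field_simp
      ring
    calc _ ≤ ∑ ℓ ∈ Finset.Icc i (m+n), ((ℓ:ℝ)-1) * (β⁻¹)^ℓ * (Lm * Ln) :=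
          Finset.sum_le_sum hsum1
      _ = (∑ ℓ ∈ Finset.Icc i (m+n), ((ℓ:ℝ)-1) * (β⁻¹)^ℓ) * (Lm * Ln) := by
          rw [Finset.sum_mul]
      _ ≤ Sag β⁻¹ i * (Lm * Ln) :=
          mul_le_mul_of_nonneg_right (ag_sum_le hx0 hx1 hi1 (m+n))
            (by positivity)
      _ = (1 - C) * (Lm * Ln) := by rw [hSag]
  linarith [hreal, hsum]
end Glue

/-- Let `ℱ` be a nonempty set of forbidden factors containing at most one factor
of each length, and let `i = min{|f| : f ∈ ℱ}`. If there is `β > 1` with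
`|𝒜| − β^(2−i)/(β−1) ≥ β` and `C := 1 − β^(1−i)·(1+(β−1)(i−1))/(β−1)² > 0`,
then for all `n`, `α(𝒜,ℱ)^n ≤ |ℒ_n(𝒜,ℱ)| ≤ C⁻¹·α(𝒜,ℱ)^n`. -/
theorem stmt6 {A : Type*} [Fintype A] (F : Set (List A))
    (hF : ∀ f ∈ F, f ≠ ([] : List A)) (hFne : F.Nonempty)
    (honeper : ∀ f ∈ F, ∀ g ∈ F, f.length = g.length → f = g)
    (i : ℕ) (hi : IsLeast {n : ℕ | ∃ f ∈ F, f.length = n} i)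
    (β : ℝ) (hβ : 1 < β)
    (hcond : β ≤ (Fintype.card A : ℝ) - β ^ ((2 : ℤ) - (i : ℤ)) / (β - 1))
    (C : ℝ)
    (hC : C = 1 - β ^ ((1 : ℤ) - (i : ℤ)) * (1 + (β - 1) * ((i : ℝ) - 1)) / (β - 1) ^ 2)
    (hCpos : 0 < C) :
    ∀ α : ℝ,
      Tendsto (fun n : ℕ => ((langN F n).ncard : ℝ) ^ (1 / (n : ℝ))) atTop (nhds α) →
      ∀ n : ℕ, α ^ n ≤ ((langN F n).ncard : ℝ) ∧ ((langN F n).ncard : ℝ) ≤ C⁻¹ * α ^ n := by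
  intro α hα n
  have hβ0 : (0:ℝ) < β := lt_trans one_pos hβ
  have hi1 : 1 ≤ i := i_pos hF hi
  have hC1 : C ≤ 1 := by
    rw [hC]
    have h1 : (0:ℝ) ≤ β ^ ((1:ℤ)-(i:ℤ)) := zpow_nonneg hβ0.le _
    have h2 : (0:ℝ) ≤ 1 + (β-1)*((i:ℝ)-1) := by
      have : (1:ℝ) ≤ (i:ℝ) := by exact_mod_cast hi1
      nlinarith
    have h3 : (0:ℝ) ≤ (β-1)^2 := sq_nonneg _
    have := div_nonneg (mul_nonneg h1 h2) h3
    linarith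
  rcases Nat.eq_zero_or_pos n with rfl | hn
  · rw [pow_zero, langN_zero hF]
    norm_num
    exact one_le_inv_iff₀.mpr ⟨hCpos, hC1⟩
  have hn' : (n:ℝ) ≠ 0 := Nat.cast_ne_zero.mpr hn.ne'
  have hmap : Tendsto (fun k : ℕ => (k+1)*n) atTop atTop := by
    apply Filter.tendsto_atTop_atTop.mpr
    intro b
    exact ⟨b, fun a ha =>
      le_trans (le_trans ha (Nat.le_succ a)) (Nat.le_mul_of_pos_right _ hn)⟩
  have hu : Tendsto (fun k : ℕ =>
      ((langN F ((k+1)*n)).ncard : ℝ) ^ (1/((((k+1)*n : ℕ)) : ℝ))) atTop (nhds α) :=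
    hα.comp hmap
  have hexp : ∀ k : ℕ, ((k:ℝ)+1) * (1/((((k+1)*n : ℕ)) : ℝ)) = 1/(n:ℝ) := by
    intro k
    have h1 : ((((k+1)*n : ℕ)) : ℝ) = ((k:ℝ)+1) * (n:ℝ) := by push_cast; ring
    have hk : (k:ℝ)+1 ≠ 0 := by positivity
    rw [h1]
    field_simp
  have hepos : ∀ k : ℕ, (0:ℝ) < ((((k+1)*n : ℕ)) : ℝ) := by
    intro k
    have : 0 < (k+1)*n := Nat.mul_pos (Nat.succ_pos k) hn
    exact_mod_cast this
  -- upper bound for α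
  have hsubk : ∀ k : ℕ, (langN F ((k+1)*n)).ncard ≤ (langN F n).ncard ^ (k+1) := by
    intro k
    induction k with
    | zero => simp
    | succ k ih =>
      calc (langN F ((k+1+1)*n)).ncard
          = (langN F ((k+1)*n + n)).ncard := by rw [show (k+1+1)*n = (k+1)*n+n by ring]
        _ ≤ (langN F ((k+1)*n)).ncard * (langN F n).ncard := submult F _ _
        _ ≤ (langN F n).ncard^(k+1) * (langN F n).ncard := Nat.mul_le_mul_right _ ih
        _ = (langN F n).ncard^(k+1+1) := by ring
  have hαle : α ≤ ((langN F n).ncard : ℝ) ^ ((1:ℝ)/(n:ℝ)) := by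
    refine le_of_tendsto hu (Filter.Eventually.of_forall fun k => ?_)
    have h0 : (0:ℝ) ≤ ((langN F ((k+1)*n)).ncard : ℝ) := Nat.cast_nonneg _
    have hle : ((langN F ((k+1)*n)).ncard : ℝ) ≤ ((langN F n).ncard : ℝ)^(k+1) := by
      exact_mod_cast hsubk k
    have h2 := Real.rpow_le_rpow h0 hle
      (by positivity : (0:ℝ) ≤ 1/((((k+1)*n : ℕ)) : ℝ))
    refine h2.trans (le_of_eq ?_)
    rw [← Real.rpow_natCast ((langN F n).ncard : ℝ) (k+1),
      ← Real.rpow_mul (Nat.cast_nonneg _),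
      show ((k+1 : ℕ):ℝ) = (k:ℝ)+1 by push_cast; ring, hexp k]
  have hα0 : 0 ≤ α :=
    ge_of_tendsto' hα (fun m => Real.rpow_nonneg (Nat.cast_nonneg _) _)
  have hup : α ^ n ≤ ((langN F n).ncard : ℝ) := by
    have h := pow_le_pow_left₀ hα0 hαle n
    rwa [← Real.rpow_natCast (((langN F n).ncard : ℝ) ^ ((1:ℝ)/(n:ℝ))) n,
      ← Real.rpow_mul (Nat.cast_nonneg _), one_div,
      inv_mul_cancel₀ hn', Real.rpow_one] at h
  -- lower bound
  have hsupk : ∀ k : ℕ,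
      C^k * ((langN F n).ncard : ℝ)^(k+1) ≤ ((langN F ((k+1)*n)).ncard : ℝ) := by
    intro k
    induction k with
    | zero => simp
    | succ k ih =>
      have hg := glue_real hF honeper hi hβ hcond C hC ((k+1)*n) n
      rw [show (k+1)*n + n = (k+1+1)*n by ring] at hg
      calc C^(k+1) * ((langN F n).ncard : ℝ)^(k+1+1)
          = C * ((C^k * ((langN F n).ncard : ℝ)^(k+1)) * ((langN F n).ncard : ℝ)) := by
            ring
        _ ≤ C * (((langN F ((k+1)*n)).ncard : ℝ) * ((langN F n).ncard : ℝ)) := by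
            apply mul_le_mul_of_nonneg_left _ hCpos.le
            exact mul_le_mul_of_nonneg_right ih (Nat.cast_nonneg _)
        _ ≤ _ := hg
  have hCL0 : (0:ℝ) ≤ C * ((langN F n).ncard : ℝ) :=
    mul_nonneg hCpos.le (Nat.cast_nonneg _)
  have hkey : ∀ k : ℕ, (C * ((langN F n).ncard : ℝ))^(k+1) ≤
      C * ((langN F ((k+1)*n)).ncard : ℝ) := by
    intro k
    calc (C * ((langN F n).ncard : ℝ))^(k+1)
        = C * (C^k * ((langN F n).ncard : ℝ)^(k+1)) := by rw [mul_pow]; ring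
      _ ≤ _ := mul_le_mul_of_nonneg_left (hsupk k) hCpos.le
  have he0 : Tendsto (fun k : ℕ => 1/((((k+1)*n : ℕ)) : ℝ)) atTop (nhds 0) := by
    simp only [one_div]
    exact Filter.Tendsto.inv_tendsto_atTop (tendsto_natCast_atTop_atTop.comp hmap)
  have hgC : Tendsto (fun k : ℕ => C ^ (1/((((k+1)*n : ℕ)) : ℝ))) atTop (nhds 1) := by
    have h := (tendsto_const_nhds : Tendsto (fun _ : ℕ => C) atTop (nhds C)).rpow
      he0 (Or.inl hCpos.ne')
    simpa using h
  have hprod : Tendsto (fun k : ℕ => C ^ (1/((((k+1)*n : ℕ)) : ℝ)) *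
      (((langN F ((k+1)*n)).ncard : ℝ) ^ (1/((((k+1)*n : ℕ)) : ℝ)))) atTop (nhds α) := by
    simpa using hgC.mul hu
  have hlow : (C * ((langN F n).ncard : ℝ)) ^ ((1:ℝ)/(n:ℝ)) ≤ α := by
    refine ge_of_tendsto' hprod (fun k => ?_)
    have h1 := Real.rpow_le_rpow (pow_nonneg hCL0 _) (hkey k)
      (by positivity : (0:ℝ) ≤ 1/((((k+1)*n : ℕ)) : ℝ))
    rw [Real.mul_rpow hCpos.le (Nat.cast_nonneg _),
      ← Real.rpow_natCast (C * ((langN F n).ncard : ℝ)) (k+1),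
      ← Real.rpow_mul hCL0,
      show ((k+1 : ℕ):ℝ) = (k:ℝ)+1 by push_cast; ring, hexp k] at h1
    exact h1
  have hlow2 : C * ((langN F n).ncard : ℝ) ≤ α^n := by
    have h := pow_le_pow_left₀ (Real.rpow_nonneg hCL0 _) hlow n
    rwa [← Real.rpow_natCast ((C * ((langN F n).ncard : ℝ)) ^ ((1:ℝ)/(n:ℝ))) n,
      ← Real.rpow_mul hCL0, one_div, inv_mul_cancel₀ hn', Real.rpow_one] at h
  exact ⟨hup, (le_inv_mul_iff₀ hCpos).mpr hlow2⟩
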